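/- Let E be a real Banach space, ε > 0, h : [0,∞) → E continuous, and v : [0,∞) → E differentiable with ε v'(t) = v(t) + h(t) for all t ≥ 0. Assume in addition that t ↦ e^{-t/ε} h(t) is Bochner integrable on [0,∞) and that there exists a sequence T_n → ∞ with v(T_n) → 0 in E. Then for every τ ≥ 0, v(τ) = −∫_τ^∞ ε⁻¹ e^{(τ−t)/ε} h(t) dt. -/

import Mathlib

/-!
Multiplying by the integrating factor `e^{-t/ε}` turns `ε v' = v + h` into
`(e^{-t/ε} v)' = ε⁻¹ e^{-t/ε} h`. Integrating over `[τ, T_n]` and letting `n → ∞`, the boundary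
term `e^{-T_n/ε} v(T_n)` vanishes, so `e^{-τ/ε} v(τ) = -∫_τ^∞ ε⁻¹ e^{-t/ε} h(t) dt`.
-/

open Real MeasureTheory Filter Set Topology

section

variable {E : Type*} [NormedAddCommGroup E] [NormedSpace ℝ E]

/-- Unlike `integral_Ioi_of_hasDerivAt_of_tendsto`, `f` need only converge along some `T → ∞`. -/
theorem integral_Ioi_of_hasDerivAt_of_tendsto_comp [CompleteSpace E] {f f' : ℝ → E} {a : ℝ}
    {L : E} {ι : Type*} {l : Filter ι} [l.NeBot] [l.IsCountablyGenerated] {T : ι → ℝ}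
    (hderiv : ∀ x ∈ Ici a, HasDerivAt f (f' x) x) (hint : IntegrableOn f' (Ioi a))
    (hT : Tendsto T l atTop) (hfT : Tendsto (f ∘ T) l (𝓝 L)) :
    ∫ x in Ioi a, f' x = L - f a := by
  have hFTC : ∀ᶠ i in l, ∫ x in a..T i, f' x = f (T i) - f a := by
    filter_upwards [hT.eventually_ge_atTop a] with i hi
    refine intervalIntegral.integral_eq_sub_of_hasDerivAt (fun x hx => hderiv x ?_) ?_
    · exact (uIcc_of_le hi ▸ hx).1
    · exact (intervalIntegrable_iff_integrableOn_Ioc_of_le hi).2 (hint.mono_set Ioc_subset_Ioi_self)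
  exact tendsto_nhds_unique ((intervalIntegral_tendsto_integral_Ioi a hint hT).congr' hFTC)
    (hfT.sub_const (f a))

theorem hasDerivAt_exp_neg_div_smul_of_smul_eq_add {v : ℝ → E} {v' w : E} {ε t : ℝ}
    (hε : ε ≠ 0) (hv : HasDerivAt v v' t) (hode : ε • v' = v t + w) :
    HasDerivAt (fun s => exp (-s / ε) • v s) ((ε⁻¹ * exp (-t / ε)) • w) t := by
  have hexp : HasDerivAt (fun s => exp (-s / ε)) (exp (-t / ε) * -ε⁻¹) t := by
    simpa only [neg_div, neg_mul, one_mul, one_div] using ((hasDerivAt_neg t).div_const ε).exp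
  have hv' : v' = ε⁻¹ • (v t + w) := by rw [← hode, inv_smul_smul₀ hε]
  refine (hexp.smul hv).congr_deriv ?_
  rw [hv']
  module

end

theorem stmt_7_general (E : Type*) [NormedAddCommGroup E] [NormedSpace ℝ E] [CompleteSpace E]
    (ε : ℝ) (hε : 0 < ε) (h : ℝ → E)
    (v v' : ℝ → E) (hv : ∀ t ∈ Set.Ici (0 : ℝ), HasDerivAt v (v' t) t)
    (hode : ∀ t ∈ Set.Ici (0 : ℝ), ε • v' t = v t + h t)
    (hint : IntegrableOn (fun t => Real.exp (-t / ε) • h t) (Set.Ici 0))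
    (T : ℕ → ℝ) (hT : Tendsto T atTop atTop)
    (hvT : Tendsto (fun n => v (T n)) atTop (nhds 0)) :
    ∀ τ : ℝ, 0 ≤ τ →
      v τ = -∫ t in Set.Ioi τ, (ε⁻¹ * Real.exp ((τ - t) / ε)) • h t := by
  intro τ hτ
  have hderiv (t : ℝ) (ht : t ∈ Ici τ) := hasDerivAt_exp_neg_div_smul_of_smul_eq_add
    hε.ne' (hv t (hτ.trans ht)) (hode t (hτ.trans ht))
  have hint' : IntegrableOn (fun t => (ε⁻¹ * exp (-t / ε)) • h t) (Ioi τ) := by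
    simpa only [mul_smul, Pi.smul_def, IntegrableOn] using
      (hint.mono_set (Ioi_subset_Ici hτ)).smul ε⁻¹
  have hexp : Tendsto (fun n => exp (-T n / ε)) atTop (𝓝 0) := by
    simpa only [neg_div, Function.comp_def] using
      tendsto_exp_neg_atTop_nhds_zero.comp (hT.atTop_div_const hε)
  have hFTC := integral_Ioi_of_hasDerivAt_of_tendsto_comp hderiv hint' hT
    (by simpa only [zero_smul, Function.comp_def] using hexp.smul hvT)
  calc v τ = exp (τ / ε) • (exp (-τ / ε) • v τ) := by
        rw [smul_smul, ← exp_add, neg_div, add_neg_cancel, exp_zero, one_smul]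
    _ = -∫ t in Ioi τ, exp (τ / ε) • (ε⁻¹ * exp (-t / ε)) • h t := by
        rw [integral_smul, hFTC, zero_sub, smul_neg, neg_neg]
    _ = -∫ t in Ioi τ, (ε⁻¹ * exp ((τ - t) / ε)) • h t := by
        congr! 3 with t
        rw [smul_smul, sub_eq_add_neg, add_div, exp_add, mul_left_comm]

/-- Infinite-horizon variation-of-constants formula for `ε v' = v + h` on `[0,∞)`:
if `e^{-t/ε} h(t)` is Bochner integrable on `[0,∞)` and `v(T_n) → 0` along some sequence
`T_n → ∞`, then `v(τ) = −∫_τ^∞ ε⁻¹ e^{(τ−t)/ε} h(t) dt` for every `τ ≥ 0`. -/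
theorem stmt_7 (E : Type*) [NormedAddCommGroup E] [NormedSpace ℝ E] [CompleteSpace E]
    (ε : ℝ) (hε : 0 < ε) (h : ℝ → E) (hh : ContinuousOn h (Set.Ici 0))
    (v v' : ℝ → E) (hv : ∀ t ∈ Set.Ici (0 : ℝ), HasDerivAt v (v' t) t)
    (hode : ∀ t ∈ Set.Ici (0 : ℝ), ε • v' t = v t + h t)
    (hint : IntegrableOn (fun t => Real.exp (-t / ε) • h t) (Set.Ici 0))
    (T : ℕ → ℝ) (hT : Tendsto T atTop atTop)
    (hvT : Tendsto (fun n => v (T n)) atTop (nhds 0)) :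
    ∀ τ : ℝ, 0 ≤ τ →
      v τ = -∫ t in Set.Ioi τ, (ε⁻¹ * Real.exp ((τ - t) / ε)) • h t :=
  stmt_7_general E ε hε h v v' hv hode hint T hT hvT
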